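/- arXiv:1812.05997 — 4 statements merged into one kernel-verified Lean document; each statement's English description precedes it below -/
import Mathlib

section
/- Under the measure P_{α,r} on words over {0,...,r-1} (length Poisson(αr), letters i.i.d. uniform), for j ≤ r the expected number of subsets A of size j of the index set that are complete in W equals α^j. -/
/-!
Summing over words first, each strictly increasing `A : Fin j → Fin n` is complete in exactly
`j! · r^(n-j)` words: the `i`-th constrained letter (zero-indexed) has `min r (j - i) = j - i`
admissible values and the other `n - j` letters are free. Weighting by `wordProb`, the factors `r^n`
cancel and what remains is `j! / r^j` times the factorial moment `E[C(N, j)] = λ^j / j!` of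
`N ~ Poisson(λ)`, `λ = αr`.
-/

/-- The probability of each fixed word of length `n` over `{0,...,r-1}` under the
measure where the length is `Poisson(αr)` and letters are i.i.d. uniform. -/
noncomputable def wordProb (α : ℝ) (r n : ℕ) : ℝ :=
  (Real.exp (-(α * r)) * (α * r) ^ n / Nat.factorial n) * (1 / r) ^ n

/-- A set of indices `A = {a_1 < ... < a_j}` (given by a strictly monotone map
`Fin j → Fin n`) is complete in the word `w` iff `w_{a_i} ≤ min (j - i) (r - 1)`
for all `1 ≤ i ≤ j` (zero-indexed below). -/
def completeCount (r n j : ℕ) (w : Fin n → Fin r) : ℕ :=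
  (Finset.univ.filter (fun A : Fin j → Fin n =>
    StrictMono A ∧ ∀ i : Fin j, (w (A i) : ℕ) ≤ min (j - (i : ℕ) - 1) (r - 1))).card

open Finset Function
open scoped Nat

theorem Finset.card_filter_forall_apply_mem_of_injective {ι κ β : Type*} [Fintype ι]
    [Fintype κ] [DecidableEq κ] [Fintype β] [DecidableEq β] {A : ι → κ} (hA : Injective A)
    (s : ι → Finset β) :
    #{f : κ → β | ∀ i, f (A i) ∈ s i}
      = (∏ i, #(s i)) * Fintype.card β ^ (Fintype.card κ - Fintype.card ι) := by
  set S : κ → Finset β := fun k => {b | ∀ i, A i = k → b ∈ s i}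
  have hS_image (i : ι) : S (A i) = s i := by
    ext b
    simpa [S] using ⟨fun h => h i rfl, fun h i' hi' => hA hi' ▸ h⟩
  have hS_compl : ∀ k ∈ (univ.image A)ᶜ, S k = univ := by
    intro k hk
    ext b
    simp only [mem_compl, mem_image, mem_univ, true_and, not_exists] at hk
    simp [S, hk]
  have hfilter : ({f : κ → β | ∀ i, f (A i) ∈ s i} : Finset _) = Fintype.piFinset S := by
    ext f
    simpa [S] using ⟨fun h k i hi => hi ▸ h i, fun h i => h (A i) i rfl⟩
  rw [hfilter, Fintype.card_piFinset, ← prod_mul_prod_compl (univ.image A),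
    prod_image hA.injOn, prod_congr rfl (fun i _ => congrArg card (hS_image i)),
    prod_congr rfl (fun k hk => congrArg card (hS_compl k hk)), prod_const, card_univ,
    card_compl, card_image_of_injective _ hA, card_univ]

theorem Fin.card_filter_strictMono (j n : ℕ) :
    #{A : Fin j → Fin n | StrictMono A} = n.choose j := by
  let e : {A : Fin j → Fin n // StrictMono A} ≃ (Fin j ↪o Fin n) :=
    { toFun := fun A => OrderEmbedding.ofStrictMono A.1 A.2
      invFun := fun e => ⟨e, e.strictMono⟩
      left_inv := fun _ => rfl
      right_inv := fun _ => rfl }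
  rw [← Fintype.card_subtype, ← Nat.card_eq_fintype_card,
    Nat.card_congr (e.trans Set.powersetCard.ofFinEmbEquiv), Set.powersetCard.card, Nat.card_fin]

theorem Fin.card_filter_val_le {r : ℕ} (c : ℕ) : #{x : Fin r | (x : ℕ) ≤ c} = min r (c + 1) := by
  simp_rw [Nat.le_iff_lt_add_one, Fin.card_filter_val_lt]

theorem prod_fin_min_sub_add_one {r j : ℕ} (hjr : j ≤ r) (hr : 0 < r) :
    ∏ i : Fin j, min r (min (j - i - 1) (r - 1) + 1) = j ! := by
  have h (i : Fin j) : min r (min (j - i - 1) (r - 1) + 1) = j - i := by omega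
  rw [prod_congr rfl fun i _ => h i, Fin.prod_univ_eq_prod_range (j - ·),
    ← Nat.descFactorial_eq_prod_range, Nat.descFactorial_self]

theorem sum_completeCount {r j : ℕ} (hjr : j ≤ r) (hr : 0 < r) (n : ℕ) :
    ∑ w : Fin n → Fin r, completeCount r n j w = n.choose j * (j ! * r ^ (n - j)) := by
  have hwords (A : Fin j → Fin n) (hA : StrictMono A) :
      #{w : Fin n → Fin r | ∀ i, (w (A i) : ℕ) ≤ min (j - i - 1) (r - 1)} = j ! * r ^ (n - j) := by
    have := card_filter_forall_apply_mem_of_injective (β := Fin r) hA.injective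
      fun i => {x | (x : ℕ) ≤ min (j - i - 1) (r - 1)}
    simp only [mem_filter, mem_univ, true_and, Fin.card_filter_val_le, Fintype.card_fin] at this
    rw [this, prod_fin_min_sub_add_one hjr hr]
  simp only [completeCount, ← filter_filter]
  refine (sum_card_bipartiteAbove_eq_sum_card_bipartiteBelow _).trans ?_
  refine (sum_congr rfl fun A hA => hwords A (mem_filter.1 hA).2).trans ?_
  rw [sum_const, Fin.card_filter_strictMono, smul_eq_mul]

theorem hasSum_exp_neg_mul_pow_div_factorial_mul_choose (x : ℝ) (j : ℕ) :
    HasSum (fun n => Real.exp (-x) * x ^ n / n ! * n.choose j) (x ^ j / j !) := by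
  have hshift (m : ℕ) : Real.exp (-x) * x ^ (m + j) / (m + j)! * (m + j).choose j
      = x ^ j / j ! * Real.exp (-x) * (x ^ m / m !) := by
    rw [add_comm m j, Nat.cast_add_choose]
    field_simp
    ring
  have hexp := (NormedSpace.expSeries_div_hasSum_exp x).mul_left (x ^ j / j ! * Real.exp (-x))
  rw [← Real.exp_eq_exp_ℝ, mul_assoc, ← Real.exp_add, neg_add_cancel, Real.exp_zero,
    mul_one] at hexp
  rw [← hasSum_nat_add_iff' j, sum_eq_zero fun i hi => by
    simp [Nat.choose_eq_zero_of_lt (mem_range.1 hi)], sub_zero]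
  simpa only [hshift] using hexp

theorem sum_wordProb_mul_completeCount (α : ℝ) {r j : ℕ} (hjr : j ≤ r) (hr : 0 < r) (n : ℕ) :
    ∑ w : Fin n → Fin r, wordProb α r n * (completeCount r n j w : ℝ)
      = j ! / r ^ j * (Real.exp (-(α * r)) * (α * r) ^ n / n ! * n.choose j) := by
  rw [← mul_sum, ← Nat.cast_sum, sum_completeCount hjr hr]
  rcases lt_or_ge n j with hnj | hjn
  · simp [Nat.choose_eq_zero_of_lt hnj]
  obtain ⟨m, rfl⟩ := Nat.exists_eq_add_of_le' hjn
  have : (r : ℝ) ≠ 0 := by positivity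
  simp only [wordProb, Nat.add_sub_cancel, Nat.cast_mul, Nat.cast_pow, one_div, inv_pow]
  field_simp
  ring

theorem expected_complete_sets_general (α : ℝ) (r j : ℕ) (hjr : j ≤ r)
    (hr : 0 < r) :
    ∑' n : ℕ, ∑ w : Fin n → Fin r, wordProb α r n * (completeCount r n j w : ℝ)
      = α ^ j := by
  have : (r : ℝ) ≠ 0 := by positivity
  simp_rw [sum_wordProb_mul_completeCount α hjr hr]
  rw [tsum_mul_left, (hasSum_exp_neg_mul_pow_div_factorial_mul_choose _ j).tsum_eq, mul_pow]
  field_simp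

/-- For `j ≤ r`, the expected number of complete subsets of size `j` equals `α^j`. -/
theorem expected_complete_sets (α : ℝ) (hα : 0 < α) (r j : ℕ) (hjr : j ≤ r)
    (hr : 0 < r) :
    ∑' n : ℕ, ∑ w : Fin n → Fin r, wordProb α r n * (completeCount r n j w : ℝ)
      = α ^ j :=
  expected_complete_sets_general α r j hjr hr
end

section
/- Under the measure P_{α,r} with j < r, the expected number of complete subsets A of size j such that after bumping all of A the resulting word has no zeros equals e^{-α} α^j. Equivalently, the expected number of subsets A = {a_1 < ... < a_j} ⊆ {1,...,n} (with a_0 = 0, a_{j+1} = n+1) such that A is complete and for all 0 ≤ i ≤ j, no index b in (a_i, a_{i+1}) satisfies W_b = j - i, equals e^{-α} α^j. -/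
/-- The number of subsets `A = {a_1 < ... < a_j}` of `{1,...,n}` (given as strictly
monotone maps `Fin j → Fin n`) such that `A` is complete in `w`
(`w_{a_i} ≤ j - i` for all `i`, zero-indexed below) and, after bumping all of `A`,
the resulting word has no zeros: no index `b` with exactly `i` elements of `A`
below it satisfies `w_b = j - i`. -/
def leafCount (r n j : ℕ) (w : Fin n → Fin r) : ℕ :=
  (Finset.univ.filter (fun A : Fin j → Fin n =>
    StrictMono A ∧ (∀ i : Fin j, (w (A i) : ℕ) ≤ j - (i : ℕ) - 1) ∧
      ∀ b : Fin n, (∀ i : Fin j, A i ≠ b) →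
        (w b : ℕ) ≠ j - (Finset.univ.filter (fun i : Fin j => A i < b)).card)).card

/-!
Sum over words before subsets. For a fixed strictly increasing `A` the conditions on `w` are
independent position by position: position `a_i` admits the `j - i` letters below `j - i`, and
every other position excludes exactly one letter, so the number of admissible words is
`j! (r-1)^(n-j)`, whatever the ranks. Hence `∑_w leafCount = n!/(n-j)! · (r-1)^(n-j)`, and the
Poisson average is `e^(-αr) ∑_n α^n (r-1)^(n-j) / (n-j)! = e^(-αr) α^j e^(α(r-1)) = e^(-α) α^j`.
-/

open Finset
open scoped Nat

lemma card_filter_forall_apply {ι β : Type*} [Fintype ι] [DecidableEq ι] [Fintype β]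
    (P : ι → β → Prop) [∀ b, DecidablePred (P b)]
    [DecidablePred fun w : ι → β => ∀ b, P b (w b)] :
    #{w : ι → β | ∀ b, P b (w b)} = ∏ b, #{v | P b v} := by
  rw [← Fintype.card_piFinset]
  congr 1
  ext w
  simp [Fintype.mem_piFinset]

lemma Fin.card_filter_val_le_s7 (r k : ℕ) (hk : k < r) : #{v : Fin r | (v : ℕ) ≤ k} = k + 1 := by
  have : ({v : Fin r | (v : ℕ) ≤ k} : Finset _) = Iic ⟨k, hk⟩ := by ext v; simp [Fin.le_def]
  rw [this, Fin.card_Iic]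

lemma Fin.card_filter_val_ne (r m : ℕ) (hm : m < r) : #{v : Fin r | (v : ℕ) ≠ m} = r - 1 := by
  have : ({v : Fin r | (v : ℕ) ≠ m} : Finset _) = univ.erase ⟨m, hm⟩ := by
    ext v; simp [Fin.ext_iff]
  rw [this, card_erase_of_mem (mem_univ _), card_univ, Fintype.card_fin]

lemma card_filter_leaf_words {ι : Type*} [Fintype ι] [DecidableEq ι] {r j : ℕ} (hjr : j < r)
    {A : Fin j → ι} (hA : Function.Injective A) (rank : ι → ℕ) :
    #{w : ι → Fin r | (∀ i : Fin j, (w (A i) : ℕ) ≤ j - (i : ℕ) - 1) ∧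
        ∀ b, (∀ i, A i ≠ b) → (w b : ℕ) ≠ j - rank b}
      = j ! * (r - 1) ^ (Fintype.card ι - j) := by
  classical
  let P : ι → Fin r → Prop := fun b v =>
    (∀ i : Fin j, A i = b → (v : ℕ) ≤ j - i - 1) ∧ ((∀ i, A i ≠ b) → (v : ℕ) ≠ j - rank b)
  have hP (w : ι → Fin r) : ((∀ i : Fin j, (w (A i) : ℕ) ≤ j - (i : ℕ) - 1) ∧
      ∀ b, (∀ i, A i ≠ b) → (w b : ℕ) ≠ j - rank b) ↔ ∀ b, P b (w b) := by
    simp only [P, forall_and]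
    exact and_congr ⟨fun h b i hb => hb ▸ h i, fun h i => h _ i rfl⟩ Iff.rfl
  have hpos (i : Fin j) : #{v | P (A i) v} = j - i := by
    have hPi (v : Fin r) : P (A i) v ↔ (v : ℕ) ≤ j - i - 1 := by
      simp only [P, hA.eq_iff]
      exact ⟨fun h => h.1 i rfl, fun h => ⟨fun i' hi' => hi' ▸ h, fun h' => (h' i rfl).elim⟩⟩
    rw [filter_congr (fun v _ => hPi v), Fin.card_filter_val_le_s7 r _ (by omega)]
    omega
  have hout (b : ι) (hb : b ∉ univ.image A) : #{v | P b v} = r - 1 := by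
    have hb' : ∀ i, A i ≠ b := fun i hi => hb (hi ▸ mem_image_of_mem A (mem_univ i))
    have hPb (v : Fin r) : P b v ↔ (v : ℕ) ≠ j - rank b :=
      ⟨fun h => h.2 hb', fun h => ⟨fun i hi => (hb' i hi).elim, fun _ => h⟩⟩
    rw [filter_congr (fun v _ => hPb v), Fin.card_filter_val_ne r _ (by omega)]
  rw [filter_congr (fun w _ => hP w), card_filter_forall_apply,
    ← prod_mul_prod_compl (univ.image A), prod_image (fun x _ y _ h => hA h),
    prod_congr rfl (fun i _ => hpos i), prod_congr rfl (fun b hb => hout b (mem_compl.1 hb)),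
    prod_const, card_compl, card_image_of_injective _ hA, card_univ, Fintype.card_fin,
    Fin.prod_univ_eq_prod_range (fun i => j - i), ← Nat.descFactorial_eq_prod_range,
    Nat.descFactorial_self]

lemma card_filter_strictMono (j : ℕ) (α : Type*) [Fintype α] [LinearOrder α] :
    #{A : Fin j → α | StrictMono A} = (Fintype.card α).choose j := by
  let e : {A : Fin j → α // StrictMono A} ≃ (Fin j ↪o α) :=
    { toFun A := OrderEmbedding.ofStrictMono A.1 A.2
      invFun f := ⟨f, f.strictMono⟩
      left_inv _ := rfl
      right_inv _ := rfl }
  rw [← Fintype.card_subtype, Fintype.card_eq_nat_card, Nat.card_congr e,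
    Nat.card_congr Set.powersetCard.ofFinEmbEquiv, Set.powersetCard.card, Nat.card_eq_fintype_card]

lemma sum_card_filter_and_comm {α β : Type*} [Fintype α] [Fintype β] (p : α → Prop)
    (q : β → α → Prop) [DecidablePred p] [∀ w, DecidablePred (q w)]
    [∀ a, DecidablePred (q · a)] :
    ∑ w, #{a | p a ∧ q w a} = ∑ a ∈ {a | p a}, #{w | q w a} := by
  simp only [card_filter, sum_filter, ite_and]
  rw [sum_comm]
  refine sum_congr rfl fun a _ => ?_
  split_ifs <;> simp

lemma sum_leafCount {r j : ℕ} (hjr : j < r) (n : ℕ) :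
    ∑ w : Fin n → Fin r, leafCount r n j w = n.descFactorial j * (r - 1) ^ (n - j) := by
  unfold leafCount
  rw [sum_card_filter_and_comm]
  calc _ = ∑ A ∈ {A : Fin j → Fin n | StrictMono A}, j ! * (r - 1) ^ (n - j) :=
        sum_congr rfl fun A hA => by
          convert card_filter_leaf_words hjr (mem_filter.1 hA).2.injective
            (fun b => #{i | A i < b}) using 3
          rw [Fintype.card_fin]
    _ = n.descFactorial j * (r - 1) ^ (n - j) := by
      rw [sum_const, smul_eq_mul, card_filter_strictMono, Fintype.card_fin,
        Nat.descFactorial_eq_factorial_mul_choose]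
      ring

lemma hasSum_descFactorial_mul_pow_div_factorial (x y : ℝ) (j : ℕ) :
    HasSum (fun n => (n.descFactorial j : ℝ) * y ^ (n - j) * x ^ n / n !)
      (x ^ j * Real.exp (x * y)) := by
  rw [← (add_left_injective j).hasSum_iff]
  · have hterm (m : ℕ) : ((m + j).descFactorial j : ℝ) * y ^ (m + j - j) * x ^ (m + j) / (m + j)!
        = x ^ j * ((x * y) ^ m / m !) := by
      have h := Nat.factorial_mul_descFactorial (Nat.le_add_left j m)
      rw [Nat.add_sub_cancel] at h ⊢
      rw [← h]
      push_cast
      field_simp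
      ring
    simp only [Function.comp_def, hterm]
    exact (Real.exp_eq_exp_ℝ ▸ NormedSpace.expSeries_div_hasSum_exp (x * y)).mul_left (x ^ j)
  · intro n hn
    have : n < j := by
      by_contra h
      exact hn ⟨n - j, Nat.sub_add_cancel (not_lt.1 h)⟩
    simp [Nat.descFactorial_eq_zero_iff_lt.2 this]

lemma wordProb_eq (α : ℝ) {r : ℕ} (hr : r ≠ 0) (n : ℕ) :
    wordProb α r n = Real.exp (-(α * r)) * α ^ n / n ! := by
  rw [wordProb, mul_pow, one_div, inv_pow]
  field_simp

theorem expected_leaves_general (α : ℝ) (r j : ℕ) (hjr : j < r) :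
    ∑' n : ℕ, ∑ w : Fin n → Fin r, wordProb α r n * (leafCount r n j w : ℝ)
      = Real.exp (-α) * α ^ j := by
  have hr : 1 ≤ r := by omega
  have hterm (n : ℕ) : ∑ w : Fin n → Fin r, wordProb α r n * (leafCount r n j w : ℝ)
      = Real.exp (-(α * r)) *
          ((n.descFactorial j : ℝ) * ((r : ℝ) - 1) ^ (n - j) * α ^ n / n !) := by
    rw [← mul_sum, ← Nat.cast_sum, sum_leafCount hjr, wordProb_eq α (by omega)]
    push_cast [Nat.cast_sub hr]
    ring
  rw [tsum_congr hterm, tsum_mul_left,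
    (hasSum_descFactorial_mul_pow_div_factorial α ((r : ℝ) - 1) j).tsum_eq, mul_left_comm,
    ← Real.exp_add]
  ring_nf

/-- For `0 < α ≤ 1` and `j < r`, the expected number of complete subsets of size
`j` whose bumping yields a word with no zeros (i.e. a leaf) equals `e^(-α) α^j`. -/
theorem expected_leaves (α : ℝ) (hα : 0 < α) (hα1 : α ≤ 1) (r j : ℕ) (hjr : j < r) :
    ∑' n : ℕ, ∑ w : Fin n → Fin r, wordProb α r n * (leafCount r n j w : ℝ)
      = Real.exp (-α) * α ^ j :=
  expected_leaves_general α r j hjr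
end

section
/- For any nonnegative integers a, b, c with a ≤ b, f_r(a+c) f_r(b+c) / f_r(c) ≤ (a+c)! (b+c)! / c!. -/
/-- The truncated factorial: `f_r(x) = x!` for `x ≤ r`, `r! r^(x-r)` otherwise. -/
def truncFactorial (r x : ℕ) : ℕ :=
  if x ≤ r then Nat.factorial x else Nat.factorial r * r ^ (x - r)

open Nat

theorem truncFactorial_zero (r : ℕ) : truncFactorial r 0 = 1 := by
  simp [truncFactorial]

theorem truncFactorial_succ (r x : ℕ) :
    truncFactorial r (x + 1) = min (x + 1) r * truncFactorial r x := by
  unfold truncFactorial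
  rcases lt_or_ge x r with h | h
  · rw [if_pos (succ_le_of_lt h), if_pos h.le, min_eq_left h, factorial_succ]
  · rw [if_neg (by omega), min_eq_right (by omega), Nat.sub_add_comm h, pow_succ]
    split_ifs with h'
    · obtain rfl : x = r := le_antisymm h' h
      simp [mul_comm]
    · ring

theorem truncFactorial_succ_le (r x : ℕ) :
    truncFactorial r (x + 1) ≤ (x + 1) * truncFactorial r x := by
  rw [truncFactorial_succ]
  exact Nat.mul_le_mul_right _ (min_le_left _ _)

theorem mul_factorial_le_factorial_mul {f : ℕ → ℕ} (hf : ∀ x, f (x + 1) ≤ (x + 1) * f x)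
    (c n : ℕ) : f (c + n) * c ! ≤ (c + n)! * f c := by
  induction n with
  | zero => rw [add_zero, mul_comm]
  | succ n ih =>
    calc f (c + n + 1) * c ! ≤ (c + n + 1) * f (c + n) * c ! :=
          Nat.mul_le_mul_right _ (hf _)
      _ = (c + n + 1) * (f (c + n) * c !) := mul_assoc ..
      _ ≤ (c + n + 1) * ((c + n)! * f c) := Nat.mul_le_mul_left _ ih
      _ = (c + n + 1)! * f c := by rw [factorial_succ, mul_assoc]

theorem truncFactorial_le_factorial (r x : ℕ) : truncFactorial r x ≤ x ! := by
  simpa [truncFactorial_zero] using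
    mul_factorial_le_factorial_mul (truncFactorial_succ_le r) 0 x

theorem truncFactorial_div_le_factorial_div (r c n : ℕ) :
    (truncFactorial r (c + n) : ℝ) / truncFactorial r c ≤ ((c + n)! : ℝ) / c ! := by
  rcases (truncFactorial r c).eq_zero_or_pos with h | h
  · -- only for `r = 0 < c`; the left side is then `0` since `x / 0 = 0`
    rw [h, Nat.cast_zero, div_zero]
    positivity
  · rw [div_le_div_iff₀ (by exact_mod_cast h) (by positivity)]
    exact_mod_cast mul_factorial_le_factorial_mul (truncFactorial_succ_le r) c n

theorem truncFactorial_ratio_le_general (r a b c : ℕ) :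
    (truncFactorial r (a + c) : ℝ) * truncFactorial r (b + c) / truncFactorial r c
      ≤ (Nat.factorial (a + c) : ℝ) * Nat.factorial (b + c) / Nat.factorial c := by
  rw [mul_div_assoc, mul_div_assoc, add_comm b c]
  exact mul_le_mul (by exact_mod_cast truncFactorial_le_factorial r (a + c))
    (truncFactorial_div_le_factorial_div r c b) (by positivity) (by positivity)

/-- For nonnegative integers `a ≤ b` and `c`,
`f_r(a+c) f_r(b+c) / f_r(c) ≤ (a+c)! (b+c)! / c!`. -/
theorem truncFactorial_ratio_le (r a b c : ℕ) (hr : 0 < r) (hab : a ≤ b) :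
    (truncFactorial r (a + c) : ℝ) * truncFactorial r (b + c) / truncFactorial r c
      ≤ (Nat.factorial (a + c) : ℝ) * Nat.factorial (b + c) / Nat.factorial c :=
  truncFactorial_ratio_le_general r a b c
end

section
/- For 1/2 < α < 1, the sum ∑_{0 ≤ a < b, 0 ≤ c} C(a+c, a) α^{a+b+c} equals (1/(2α-1)) ∑_{b>0} ((α²/(1-α))^b − α^b); consequently this sum diverges if and only if α²/(1-α) ≥ 1, i.e., if and only if α ≥ (√5 − 1)/2. -/
/-!
Summing over `c` first gives the negative binomial series `∑_c C(a+c,a) α^c = (1-α)^-(a+1)`;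
what remains for fixed `b` is a finite geometric sum over `a < b` with ratio `α/(1-α)`, equal to
`((α²/(1-α))^b - α^b)/(2α-1)`. Working in `ℝ≥0∞` makes every rearrangement legitimate. Since `α^b`
is summable, the series over `b` diverges exactly when `α²/(1-α) ≥ 1`, i.e. `α² + α - 1 ≥ 0`.
-/

open ENNReal Finset

theorem tsum_ite_lt_eq_tsum_sum_range (f : ℕ → ℕ → ℕ → ℝ≥0∞) :
    ∑' p : ℕ × ℕ × ℕ, (if p.1 < p.2.1 then f p.1 p.2.1 p.2.2 else 0)
      = ∑' b, ∑ a ∈ range b, ∑' c, f a b c := by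
  simp_rw [ENNReal.tsum_prod']
  rw [ENNReal.tsum_comm]
  refine tsum_congr fun b => ?_
  rw [tsum_eq_sum (s := range b) fun a ha => by simp_all]
  exact sum_congr rfl fun a ha => by simp_all

theorem ENNReal.tsum_choose_add_mul_pow_ofReal {α : ℝ} (h0 : 0 ≤ α) (h1 : α < 1) (a : ℕ) :
    ∑' c : ℕ, ((c + a).choose a : ℝ≥0∞) * ENNReal.ofReal α ^ c
      = ENNReal.ofReal (1 / (1 - α) ^ (a + 1)) := by
  have hα : ‖α‖ < 1 := by rwa [Real.norm_of_nonneg h0]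
  rw [← tsum_choose_mul_geometric_of_norm_lt_one a hα,
    ENNReal.ofReal_tsum_of_nonneg (fun c => by positivity)
      (summable_choose_mul_geometric_of_norm_lt_one a hα)]
  refine tsum_congr fun c => ?_
  rw [ENNReal.ofReal_mul (by positivity), ENNReal.ofReal_pow h0, ENNReal.ofReal_natCast]

theorem sum_range_pow_add_div_one_sub_pow {α : ℝ} (h1 : α ≠ 1) (h2 : 2 * α - 1 ≠ 0) (b : ℕ) :
    ∑ a ∈ range b, α ^ (a + b) / (1 - α) ^ (a + 1)
      = 1 / (2 * α - 1) * ((α ^ 2 / (1 - α)) ^ b - α ^ b) := by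
  have h1' : 1 - α ≠ 0 := sub_ne_zero.mpr h1.symm
  have hr : α / (1 - α) ≠ 1 := fun h => h2 (by field_simp at h; linarith)
  have hterm : ∀ a, α ^ (a + b) / (1 - α) ^ (a + 1) = α ^ b / (1 - α) * (α / (1 - α)) ^ a := by
    intro a; rw [pow_add, pow_succ, div_pow]; field_simp
  rw [sum_congr rfl fun a _ => hterm a, ← mul_sum, geom_sum_eq hr]
  field_simp
  ring

theorem ENNReal.tsum_pow_succ_sub_pow_succ_eq_top_iff {q x : ℝ≥0∞} (hx : x < 1) :
    ∑' b : ℕ, (q ^ (b + 1) - x ^ (b + 1)) = ⊤ ↔ 1 ≤ q := by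
  constructor
  · intro hT
    by_contra! hq
    have hle : ∑' b : ℕ, (q ^ (b + 1) - x ^ (b + 1)) ≤ (1 - q)⁻¹ := by
      rw [← ENNReal.tsum_geometric]
      exact ENNReal.tsum_le_tsum fun b =>
        tsub_le_self.trans (pow_le_pow_of_le_one zero_le hq.le b.le_succ)
    exact ENNReal.inv_ne_top.mpr (tsub_pos_of_lt hq).ne' (top_le_iff.mp (hT ▸ hle))
  · intro hq
    refine top_le_iff.mp ?_
    calc (⊤ : ℝ≥0∞) = ∑' _ : ℕ, (1 - x) :=
          (ENNReal.tsum_const_eq_top_of_ne_zero (tsub_pos_of_lt hx).ne').symm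
      _ ≤ ∑' b : ℕ, (q ^ (b + 1) - x ^ (b + 1)) :=
          ENNReal.tsum_le_tsum fun b => tsub_le_tsub (one_le_pow_of_one_le' hq _)
            (pow_le_of_le_one zero_le hx.le b.succ_ne_zero)

theorem one_le_sq_div_one_sub_iff {α : ℝ} (h0 : 0 ≤ α) (h1 : α < 1) :
    1 ≤ α ^ 2 / (1 - α) ↔ (√5 - 1) / 2 ≤ α := by
  have h5 : √5 ^ 2 = 5 := Real.sq_sqrt (by norm_num)
  rw [le_div_iff₀ (by linarith), one_mul]
  constructor
  · intro h; nlinarith [sq_nonneg (2 * α + 1 - √5), Real.sqrt_nonneg 5]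
  · intro h; nlinarith [Real.sqrt_nonneg 5]

theorem sum_range_tsum_choose_mul_ofReal_pow {α : ℝ} (h1 : 1 / 2 < α) (h2 : α < 1) (b : ℕ) :
    ∑ a ∈ range b, ∑' c, ((a + c).choose a : ℝ≥0∞) * ENNReal.ofReal α ^ (a + b + c)
      = ENNReal.ofReal (1 / (2 * α - 1)) *
          (ENNReal.ofReal (α ^ 2 / (1 - α)) ^ b - ENNReal.ofReal α ^ b) := by
  have h0 : 0 ≤ α := by linarith
  have hinner (a : ℕ) : ∑' c, ((a + c).choose a : ℝ≥0∞) * ENNReal.ofReal α ^ (a + b + c)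
      = ENNReal.ofReal (α ^ (a + b) / (1 - α) ^ (a + 1)) := by
    calc ∑' c, ((a + c).choose a : ℝ≥0∞) * ENNReal.ofReal α ^ (a + b + c)
        = ENNReal.ofReal α ^ (a + b) * ∑' c, ((c + a).choose a : ℝ≥0∞) * ENNReal.ofReal α ^ c := by
          rw [← ENNReal.tsum_mul_left]
          exact tsum_congr fun c => by rw [pow_add, add_comm a c]; ring
      _ = ENNReal.ofReal (α ^ (a + b) / (1 - α) ^ (a + 1)) := by
          rw [ENNReal.tsum_choose_add_mul_pow_ofReal h0 h2, ← ENNReal.ofReal_pow h0,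
            ← ENNReal.ofReal_mul (by positivity), mul_one_div]
  have h2α : 0 < 1 / (2 * α - 1) := one_div_pos.mpr (by linarith)
  rw [sum_congr rfl fun a _ => hinner a, ← ENNReal.ofReal_sum_of_nonneg fun a _ => by positivity,
    sum_range_pow_add_div_one_sub_pow h2.ne (by linarith), ENNReal.ofReal_mul h2α.le,
    ENNReal.ofReal_sub _ (by positivity), ENNReal.ofReal_pow (by positivity), ENNReal.ofReal_pow h0]

/-- For `1/2 < α < 1`, the sum `∑_{0 ≤ a < b, 0 ≤ c} C(a+c, a) α^(a+b+c)`
(computed in `ℝ≥0∞`) equals `(1/(2α-1)) ∑_{b>0} ((α²/(1-α))^b − α^b)`;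
consequently it diverges if and only if `α²/(1-α) ≥ 1`, i.e. iff
`α ≥ (√5 − 1)/2`. -/
theorem lower_bound_sum_second_moment (α : ℝ) (h1 : 1 / 2 < α) (h2 : α < 1) :
    (∑' p : ℕ × ℕ × ℕ,
        if p.1 < p.2.1 then
          ((p.1 + p.2.2).choose p.1 : ℝ≥0∞) * (ENNReal.ofReal α) ^ (p.1 + p.2.1 + p.2.2)
        else 0)
      = ENNReal.ofReal (1 / (2 * α - 1)) *
          ∑' b : ℕ, ((ENNReal.ofReal (α ^ 2 / (1 - α))) ^ (b + 1)
            - (ENNReal.ofReal α) ^ (b + 1)) ∧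
    ((∑' p : ℕ × ℕ × ℕ,
        if p.1 < p.2.1 then
          ((p.1 + p.2.2).choose p.1 : ℝ≥0∞) * (ENNReal.ofReal α) ^ (p.1 + p.2.1 + p.2.2)
        else 0) = ⊤ ↔ (Real.sqrt 5 - 1) / 2 ≤ α) := by
  have hsum : (∑' p : ℕ × ℕ × ℕ,
        if p.1 < p.2.1 then
          ((p.1 + p.2.2).choose p.1 : ℝ≥0∞) * (ENNReal.ofReal α) ^ (p.1 + p.2.1 + p.2.2)
        else 0)
      = ENNReal.ofReal (1 / (2 * α - 1)) *
          ∑' b : ℕ, ((ENNReal.ofReal (α ^ 2 / (1 - α))) ^ (b + 1)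
            - (ENNReal.ofReal α) ^ (b + 1)) := by
    rw [tsum_ite_lt_eq_tsum_sum_range (fun a b c => ((a + c).choose a : ℝ≥0∞) * _ ^ (a + b + c)),
      tsum_eq_zero_add' ENNReal.summable]
    simp only [sum_range_tsum_choose_mul_ofReal_pow h1 h2, pow_zero, tsub_self, mul_zero, zero_add,
      ENNReal.tsum_mul_left]
  refine ⟨hsum, ?_⟩
  rw [hsum, ENNReal.mul_eq_top,
    ENNReal.tsum_pow_succ_sub_pow_succ_eq_top_iff (ENNReal.ofReal_lt_one.mpr h2), ENNReal.one_le_ofReal,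
    one_le_sq_div_one_sub_iff (by linarith) h2]
  simpa using fun _ => by linarith
end
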